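/- Completeness of the majorization lattice (infimum): For any nonempty subset Q of the probability simplex in ℝ^n, there exists a probability vector w (in non-increasing order) such that w ≺ q for every q ∈ Q, and for any probability vector x with x ≺ q for all q ∈ Q, one has x ≺ w. Moreover w is given componentwise by partial sums r_k = inf_{q∈Q} (sum of k largest entries of q), i.e., w = (r_1, r_2 − r_1, ..., r_n − r_{n−1}), provided this vector is in non-increasing order. -/
import Mathlib


open Finset

noncomputable def pMax {n : ℕ} (x : Fin n → ℝ) (k : ℕ) : ℝ :=
  sSup {s : ℝ | ∃ I : Finset (Fin n), I.card = k ∧ s = ∑ i ∈ I, x i}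

def Maj {n : ℕ} (x y : Fin n → ℝ) : Prop :=
  (∀ k ≤ n, pMax x k ≤ pMax y k) ∧ (∑ i, x i = ∑ i, y i)

def ProbVec {n : ℕ} (p : Fin n → ℝ) : Prop :=
  (∀ i, 0 ≤ p i) ∧ ∑ i, p i = 1

section helpers

variable {n : ℕ}

lemma pMaxSet_finite (x : Fin n → ℝ) (k : ℕ) :
    {s : ℝ | ∃ I : Finset (Fin n), I.card = k ∧ s = ∑ i ∈ I, x i}.Finite := by
  have h : {s : ℝ | ∃ I : Finset (Fin n), I.card = k ∧ s = ∑ i ∈ I, x i}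
      ⊆ (fun I : Finset (Fin n) => ∑ i ∈ I, x i) '' Set.univ := by
    rintro s ⟨I, hI, rfl⟩; exact ⟨I, trivial, rfl⟩
  exact (Set.finite_univ.image _).subset h

lemma pMaxSet_nonempty (x : Fin n → ℝ) {k : ℕ} (hk : k ≤ n) :
    {s : ℝ | ∃ I : Finset (Fin n), I.card = k ∧ s = ∑ i ∈ I, x i}.Nonempty := by
  obtain ⟨I, -, hI⟩ := Finset.exists_subset_card_eq (s := (univ : Finset (Fin n))) (n := k)
    (by simpa using hk)
  exact ⟨∑ i ∈ I, x i, I, hI, rfl⟩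

lemma sum_le_pMax (x : Fin n → ℝ) {k : ℕ} {I : Finset (Fin n)} (hI : I.card = k) :
    ∑ i ∈ I, x i ≤ pMax x k :=
  le_csSup (pMaxSet_finite x k).bddAbove ⟨I, hI, rfl⟩

lemma pMax_le (x : Fin n → ℝ) {k : ℕ} (hk : k ≤ n) {B : ℝ}
    (h : ∀ I : Finset (Fin n), I.card = k → ∑ i ∈ I, x i ≤ B) :
    pMax x k ≤ B := by
  apply csSup_le (pMaxSet_nonempty x hk)
  rintro s ⟨I, hI, rfl⟩; exact h I hI

lemma pMax_top (x : Fin n → ℝ) : pMax x n = ∑ i, x i := by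
  have hset : {s : ℝ | ∃ I : Finset (Fin n), I.card = n ∧ s = ∑ i ∈ I, x i} = {∑ i, x i} := by
    ext s
    constructor
    · rintro ⟨I, hI, rfl⟩
      have : I = univ := Finset.eq_univ_of_card I (by simpa using hI)
      simp [this]
    · rintro rfl; exact ⟨univ, by simp, rfl⟩
  rw [pMax, hset, csSup_singleton]

lemma pMax_nonneg (x : Fin n → ℝ) (hx : ∀ i, 0 ≤ x i) {k : ℕ} (hk : k ≤ n) :
    0 ≤ pMax x k := by
  obtain ⟨I, -, hI⟩ := Finset.exists_subset_card_eq (s := (univ : Finset (Fin n))) (n := k)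
    (by simpa using hk)
  exact le_trans (Finset.sum_nonneg fun i _ => hx i) (sum_le_pMax x hI)

lemma pMax_le_sum (x : Fin n → ℝ) (hx : ∀ i, 0 ≤ x i) {k : ℕ} (hk : k ≤ n) :
    pMax x k ≤ ∑ i, x i := by
  apply pMax_le x hk
  intro I _
  exact Finset.sum_le_sum_of_subset_of_nonneg (Finset.subset_univ I) (fun i _ _ => hx i)

lemma strictMono_le_val {k : ℕ} (f : Fin k → Fin n) (hf : StrictMono f) :
    ∀ j : Fin k, (j : ℕ) ≤ (f j : ℕ) := by
  intro j
  induction' hm : (j : ℕ) with m ih generalizing j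
  · exact Nat.zero_le _
  · have hmk : m < k := by omega
    have hlt : (⟨m, hmk⟩ : Fin k) < j := by simp [Fin.lt_def, hm]
    have h1 : m ≤ (f ⟨m, hmk⟩ : ℕ) := ih ⟨m, hmk⟩ rfl
    have h2 : (f ⟨m, hmk⟩ : ℕ) < (f j : ℕ) := hf hlt
    omega

/-- For a non-increasing vector, any `k`-subset sum is at most the sum of the first `k`. -/
lemma sum_subset_le_sum_firstK (w : Fin n → ℝ)
    (hsorted : ∀ a b : Fin n, a ≤ b → w b ≤ w a)
    {k : ℕ} (hk : k ≤ n) {I : Finset (Fin n)} (hI : I.card = k) :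
    ∑ i ∈ I, w i ≤ ∑ j : Fin k, w (Fin.castLE hk j) := by
  have hsum : ∑ i ∈ I, w i = ∑ j : Fin k, w (I.orderEmbOfFin hI j) := by
    rw [← Finset.sum_coe_sort I w,
      ← Equiv.sum_comp (I.orderIsoOfFin hI).toEquiv (fun x => w (x : Fin n))]
    exact Finset.sum_congr rfl fun j _ => by rw [← Finset.coe_orderIsoOfFin_apply]; rfl
  rw [hsum]
  apply Finset.sum_le_sum
  intro j _
  apply hsorted
  have := strictMono_le_val (I.orderEmbOfFin hI) (I.orderEmbOfFin hI).strictMono j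
  exact Fin.le_def.mpr (by simpa using this)

lemma pMax_sorted (w : Fin n → ℝ) (hsorted : ∀ a b : Fin n, a ≤ b → w b ≤ w a)
    {k : ℕ} (hk : k ≤ n) :
    pMax w k = ∑ j : Fin k, w (Fin.castLE hk j) := by
  apply le_antisymm
  · exact pMax_le w hk fun I hI => sum_subset_le_sum_firstK w hsorted hk hI
  · have hcard : ((univ : Finset (Fin k)).map (Fin.castLEEmb hk)).card = k := by simp
    have := sum_le_pMax w hcard
    rwa [Finset.sum_map] at this

end helpers

/-- completeness of the majorization lattice (infimum).  For any nonempty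
set `Q` of probability vectors, with `r k = inf_{q ∈ Q}` (sum of `k` largest entries of
`q`) and increment vector `w = (r 1, r 2 − r 1, …, r n − r (n-1))`, provided `w` is in
non-increasing order, `w` is a probability vector (in non-increasing order) that is a
greatest lower bound of `Q` under majorization. -/
theorem majorization_lattice_infimum {n : ℕ} (Q : Set (Fin n → ℝ)) (hQne : Q.Nonempty)
    (hQ : ∀ q ∈ Q, ProbVec q)
    (r : ℕ → ℝ) (hr0 : r 0 = 0)
    (hr : ∀ k ≤ n, r k = sInf {t : ℝ | ∃ q ∈ Q, t = pMax q k})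
    (w : Fin n → ℝ) (hw : ∀ m : Fin n, w m = r ((m : ℕ) + 1) - r (m : ℕ))
    (hsorted : ∀ a b : Fin n, a ≤ b → w b ≤ w a) :
    ProbVec w ∧ (∀ q ∈ Q, Maj w q) ∧
      (∀ x : Fin n → ℝ, ProbVec x → (∀ q ∈ Q, Maj x q) → Maj x w) := by
  obtain ⟨q₀, hq₀⟩ := hQne
  -- the sets defining r are nonempty and bounded below
  have hTne : ∀ k, {t : ℝ | ∃ q ∈ Q, t = pMax q k}.Nonempty :=
    fun k => ⟨pMax q₀ k, q₀, hq₀, rfl⟩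
  have hTbdd : ∀ k ≤ n, BddBelow {t : ℝ | ∃ q ∈ Q, t = pMax q k} := by
    intro k hk
    refine ⟨0, ?_⟩
    rintro t ⟨q, hq, rfl⟩
    exact pMax_nonneg q (hQ q hq).1 hk
  have hr_le : ∀ k ≤ n, ∀ q ∈ Q, r k ≤ pMax q k := by
    intro k hk q hq
    rw [hr k hk]
    exact csInf_le (hTbdd k hk) ⟨q, hq, rfl⟩
  -- partial sums of w
  have hpartial : ∀ k (hk : k ≤ n), ∑ j : Fin k, w (Fin.castLE hk j) = r k := by
    intro k hk
    have : ∑ j : Fin k, w (Fin.castLE hk j) = ∑ j ∈ Finset.range k, (r (j + 1) - r j) := by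
      rw [Finset.sum_range fun j => r (j+1) - r j]
      exact Finset.sum_congr rfl fun j _ => by rw [hw]; rfl
    rw [this, Finset.sum_range_sub, hr0, sub_zero]
  have hpMaxw : ∀ k (hk : k ≤ n), pMax w k = r k := by
    intro k hk
    rw [pMax_sorted w hsorted hk, hpartial k hk]
  -- r n = 1
  have hrn : r n = 1 := by
    rw [hr n le_rfl]
    have hset : {t : ℝ | ∃ q ∈ Q, t = pMax q n} = {1} := by
      ext t
      constructor
      · rintro ⟨q, hq, rfl⟩
        simp [pMax_top, (hQ q hq).2]
      · rintro rfl
        exact ⟨q₀, hq₀, by simp [pMax_top, (hQ q₀ hq₀).2]⟩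
    rw [hset, csInf_singleton]
  -- sum of w
  have hn0 : n ≠ 0 := by
    rintro rfl
    simpa using (hQ q₀ hq₀).2
  have hsumw : ∑ i, w i = 1 := by
    have := hpartial n le_rfl
    rw [← hrn]
    rw [← this]
    apply Finset.sum_congr rfl
    intro i _
    congr 1
  -- nonnegativity of w
  have hwnonneg : ∀ i, 0 ≤ w i := by
    intro i
    have hlast : (n - 1 : ℕ) < n := by omega
    have hle : i ≤ (⟨n - 1, hlast⟩ : Fin n) := by
      apply Fin.le_def.mpr
      have := i.isLt
      simp
      omega
    refine le_trans ?_ (hsorted i ⟨n - 1, hlast⟩ hle)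
    rw [hw]
    simp only
    have h1 : (n - 1 : ℕ) + 1 = n := by omega
    rw [h1, hrn]
    have : r (n - 1) ≤ 1 := by
      refine le_trans (hr_le (n-1) (by omega) q₀ hq₀) ?_
      calc pMax q₀ (n-1) ≤ ∑ j, q₀ j := pMax_le_sum q₀ (hQ q₀ hq₀).1 (by omega)
        _ = 1 := (hQ q₀ hq₀).2
    linarith
  refine ⟨⟨hwnonneg, hsumw⟩, ?_, ?_⟩
  · intro q hq
    refine ⟨fun k hk => ?_, by rw [hsumw, (hQ q hq).2]⟩
    rw [hpMaxw k hk]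
    exact hr_le k hk q hq
  · intro x hx hxq
    refine ⟨fun k hk => ?_, by rw [hx.2, hsumw]⟩
    rw [hpMaxw k hk, hr k hk]
    apply le_csInf (hTne k)
    rintro t ⟨q, hq, rfl⟩
    exact (hxq q hq).1 k hk
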